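/- arXiv:1504.05100 — 2 statements merged into one kernel-verified Lean document; each statement's English description precedes it below -/
import Mathlib

section
/- (Singleton-type upper bound) If C ⊆ S_n is a code with minimum Ulam distance d (i.e., any two distinct elements of C are at Ulam distance ≥ d), where 1 ≤ d ≤ n, then |C| ≤ (n − d + 1)!. -/
/-- One-line notation of a permutation of `Fin n`. -/
def oneLine {n : ℕ} (σ : Equiv.Perm (Fin n)) : List (Fin n) := List.ofFn σ

/-- Length of a longest common subsequence of the one-line notations of `σ` and `τ`. -/
noncomputable def lcsLen {n : ℕ} (σ τ : Equiv.Perm (Fin n)) : ℕ :=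
  sSup {m | ∃ w : List (Fin n), w.length = m ∧ w.Sublist (oneLine σ) ∧ w.Sublist (oneLine τ)}

/-- The Ulam distance: `d_U(σ,τ) = n - L(σ,τ)`. -/
noncomputable def ulamDist {n : ℕ} (σ τ : Equiv.Perm (Fin n)) : ℕ :=
  n - lcsLen σ τ

/-! Put `k = n - d + 1` and read off from each one-line notation the subword formed by the values
`< k`. Two permutations with the same subword have it as a common subsequence, so they are at Ulam
distance at most `n - k < d`; hence a code with minimum distance `d` injects into the `k!`
orderings of those values. -/

open List Finset
open scoped Nat

theorem le_lcsLen_of_sublist {n : ℕ} {σ τ : Equiv.Perm (Fin n)} {w : List (Fin n)}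
    (hσ : w <+ oneLine σ) (hτ : w <+ oneLine τ) : w.length ≤ lcsLen σ τ :=
  le_csSup ⟨n, fun _ ⟨v, hv, hvσ, _⟩ => hv ▸ by simpa [oneLine] using hvσ.length_le⟩
    ⟨w, rfl, hσ, hτ⟩

theorem ulamDist_le_of_sublist {n : ℕ} {σ τ : Equiv.Perm (Fin n)} {w : List (Fin n)}
    (hσ : w <+ oneLine σ) (hτ : w <+ oneLine τ) : ulamDist σ τ ≤ n - w.length :=
  Nat.sub_le_sub_left (le_lcsLen_of_sublist hσ hτ) n

theorem oneLine_perm_finRange {n : ℕ} (σ : Equiv.Perm (Fin n)) : oneLine σ ~ finRange n := by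
  simpa [oneLine, ofFn_id] using σ.ofFn_comp_perm id

def restrictedOneLine {n : ℕ} (S : Finset (Fin n)) (σ : Equiv.Perm (Fin n)) : List (Fin n) :=
  (oneLine σ).filter (· ∈ S)

section

variable {n : ℕ} (S : Finset (Fin n))

theorem restrictedOneLine_perm (σ : Equiv.Perm (Fin n)) :
    restrictedOneLine S σ ~ (finRange n).filter (· ∈ S) :=
  (oneLine_perm_finRange σ).filter _

theorem length_filter_finRange : ((finRange n).filter (· ∈ S)).length = #S := by
  rw [← List.toFinset_card_of_nodup ((nodup_finRange n).filter _)]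
  simp

theorem ulamDist_le_of_restrictedOneLine_eq {σ τ : Equiv.Perm (Fin n)}
    (h : restrictedOneLine S σ = restrictedOneLine S τ) : ulamDist σ τ ≤ n - #S := by
  have hlen : (restrictedOneLine S σ).length = #S :=
    (restrictedOneLine_perm S σ).length_eq.trans (length_filter_finRange S)
  have hτ : restrictedOneLine S σ <+ oneLine τ := h ▸ filter_sublist
  exact hlen ▸ ulamDist_le_of_sublist filter_sublist hτ

theorem card_image_restrictedOneLine_le (C : Finset (Equiv.Perm (Fin n))) :
    #(C.image (restrictedOneLine S)) ≤ (#S)! := by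
  set L := (finRange n).filter (· ∈ S)
  have hsub : C.image (restrictedOneLine S) ⊆ L.permutations.toFinset := by
    intro w hw
    obtain ⟨σ, -, rfl⟩ := Finset.mem_image.mp hw
    simpa using restrictedOneLine_perm S σ
  calc #(C.image (restrictedOneLine S)) ≤ #L.permutations.toFinset := card_le_card hsub
    _ ≤ L.permutations.length := L.permutations.toFinset_card_le
    _ = (#S)! := by rw [length_permutations, length_filter_finRange]

end

theorem singleton_bound_general {n d : ℕ} (hd1 : 1 ≤ d)
    (C : Finset (Equiv.Perm (Fin n)))
    (hC : ∀ σ ∈ C, ∀ τ ∈ C, σ ≠ τ → d ≤ ulamDist σ τ) :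
    C.card ≤ (n - d + 1).factorial := by
  set S : Finset (Fin n) := {i | i < n - d + 1}
  have hS : #S = min n (n - d + 1) := Fin.card_filter_val_lt
  have hinj : Set.InjOn (restrictedOneLine S) C := by
    intro σ hσ τ hτ h
    by_contra hne
    have := (hC σ hσ τ hτ hne).trans (ulamDist_le_of_restrictedOneLine_eq S h)
    omega
  calc C.card = #(C.image (restrictedOneLine S)) := (card_image_of_injOn hinj).symm
    _ ≤ (#S)! := card_image_restrictedOneLine_le S C
    _ ≤ (n - d + 1)! := Nat.factorial_le (hS ▸ min_le_right _ _)

/-- Singleton-type upper bound: a code in `S_n` with minimum Ulam distance `d`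
(`1 ≤ d ≤ n`) has at most `(n - d + 1)!` codewords. -/
theorem singleton_bound {n d : ℕ} (hd1 : 1 ≤ d) (hdn : d ≤ n)
    (C : Finset (Equiv.Perm (Fin n)))
    (hC : ∀ σ ∈ C, ∀ τ ∈ C, σ ≠ τ → d ≤ ulamDist σ τ) :
    C.card ≤ (n - d + 1).factorial :=
  singleton_bound_general hd1 C hC
end

section
/- (Integer-programming constraint) Let C ⊆ S_n have minimum Ulam distance d, and for a,b ∈ {1,...,n} let X_{b,a} = |{σ ∈ C : σ(b) = a}|. Then for every a ∈ {1,...,n} and every ℓ with 0 ≤ ℓ ≤ n−d, one has Σ_{b=1}^{n} C(b−1, ℓ)·C(n−b, n−d−ℓ)·X_{b,a} ≤ (n−1)!/(d−1)!. -/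
/-! Double counting. A codeword `σ` with `σ b = a`, together with `ℓ` positions before `b` and
`n - d - ℓ` positions after `b`, selects a subsequence of `σ` of length `n - d + 1` having `a` in
place `ℓ`; the left-hand side counts these selections. Deleting `a` leaves a repetition-free word
of length `n - d` avoiding `a`, and there are `(n - 1)! / (d - 1)!` such words. Deletion is
injective on selections: `a` can be reinserted in place `ℓ`, and two distinct codewords share no
subsequence of length `n - d + 1`. -/

open Finset

theorem List.pairwise_sort_append_cons_sort {α : Type*} [LinearOrder α] {A B : Finset α} {b : α}
    (hA : ∀ x ∈ A, x < b) (hB : ∀ y ∈ B, b < y) :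
    (A.sort ++ b :: B.sort).Pairwise (· < ·) := by
  simp only [List.pairwise_append, List.pairwise_cons, List.mem_cons, Finset.mem_sort]
  refine ⟨(sortedLT_sort A).pairwise, ⟨hB, (sortedLT_sort B).pairwise⟩, ?_⟩
  rintro x hx y (rfl | hy)
  exacts [hA x hx, (hA x hx).trans (hB y hy)]

theorem Finset.card_le_descFactorial_of_nodup {α : Type*} {U : Finset α} {k : ℕ}
    {T : Finset (List α)} (hT : ∀ w ∈ T, w.Nodup ∧ w.length = k ∧ ∀ x ∈ w, x ∈ U) :
    #T ≤ (#U).descFactorial k := by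
  classical
  calc #T ≤ #((univ : Finset (Fin k ↪ U)).image fun f => List.ofFn fun i => (f i : α)) := by
        refine card_le_card fun w hw => ?_
        obtain ⟨hnd, rfl, hU⟩ := hT w hw
        refine mem_image.mpr ⟨⟨fun i => ⟨w[i], hU _ (List.getElem_mem _)⟩, fun i j h => ?_⟩,
          mem_univ _, List.ofFn_getElem⟩
        exact Fin.ext (hnd.getElem_inj_iff.mp (congrArg Subtype.val h))
    _ ≤ Fintype.card (Fin k ↪ U) := card_image_le
    _ = (#U).descFactorial k := by
        rw [Fintype.card_embedding_eq, Fintype.card_fin, Fintype.card_coe]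

section Ulam

variable {n : ℕ}

theorem length_le_lcsLen {σ τ : Equiv.Perm (Fin n)} {w : List (Fin n)}
    (hσ : w.Sublist (oneLine σ)) (hτ : w.Sublist (oneLine τ)) : w.length ≤ lcsLen σ τ :=
  le_csSup ⟨n, by rintro m ⟨w', rfl, hw', -⟩; simpa [oneLine] using hw'.length_le⟩
    ⟨w, rfl, hσ, hτ⟩

theorem length_le_of_le_ulamDist {d : ℕ} {σ τ : Equiv.Perm (Fin n)} (hd : d ≤ ulamDist σ τ)
    {w : List (Fin n)} (hσ : w.Sublist (oneLine σ)) (hτ : w.Sublist (oneLine τ)) :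
    w.length ≤ n - d := by
  have := length_le_lcsLen hσ hτ
  have : w.length ≤ n := by simpa [oneLine] using hσ.length_le
  unfold ulamDist at hd
  omega

theorem map_sublist_oneLine (σ : Equiv.Perm (Fin n)) {l : List (Fin n)}
    (hl : l.Pairwise (· < ·)) : (l.map σ).Sublist (oneLine σ) := by
  rw [oneLine, List.ofFn_eq_map]
  exact (List.sublist_of_subperm_of_pairwise (hl.nodup.subperm fun x _ => List.mem_finRange x) hl
    (List.sortedLT_finRange n).pairwise).map σ

end Ulam

section Markings

/-- `⟨b, σ, A, B⟩` selects the entries of `σ` at the positions `A ∪ {b} ∪ B` and marks the one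
at position `b`. -/
abbrev Marking (n : ℕ) := Σ _ : Fin n, Equiv.Perm (Fin n) × Finset (Fin n) × Finset (Fin n)

variable {n : ℕ}

def markings (C : Finset (Equiv.Perm (Fin n))) (a : Fin n) (ℓ m : ℕ) :
    Finset (Marking n) :=
  univ.sigma fun b => {σ ∈ C | σ b = a} ×ˢ ((Iio b).powersetCard ℓ ×ˢ (Ioi b).powersetCard m)

def Marking.reducedWord (x : Marking n) : List (Fin n) :=
  (x.2.2.1.sort ++ x.2.2.2.sort).map x.2.1

variable {C : Finset (Equiv.Perm (Fin n))} {a : Fin n} {ℓ m : ℕ}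

theorem card_markings :
    #(markings C a ℓ m) =
      ∑ b : Fin n, (b : ℕ).choose ℓ * (n - 1 - b).choose m * #{σ ∈ C | σ b = a} := by
  simp only [markings, card_sigma, card_product, card_powersetCard, Fin.card_Iio,
    Fin.card_Ioi]
  exact sum_congr rfl fun b _ => by ring

theorem mem_markings {b : Fin n} {σ : Equiv.Perm (Fin n)} {A B : Finset (Fin n)} :
    ⟨b, σ, A, B⟩ ∈ markings C a ℓ m ↔
      (σ ∈ C ∧ σ b = a) ∧ (A ⊆ Iio b ∧ #A = ℓ) ∧ (B ⊆ Ioi b ∧ #B = m) := by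
  simp [markings]

variable {b : Fin n} {σ : Equiv.Perm (Fin n)} {A B : Finset (Fin n)}

theorem sublist_oneLine_and_nodup_of_mem_markings (hx : ⟨b, σ, A, B⟩ ∈ markings C a ℓ m) :
    (A.sort.map σ ++ a :: B.sort.map σ).Sublist (oneLine σ) ∧
      (A.sort.map σ ++ a :: B.sort.map σ).Nodup := by
  obtain ⟨⟨-, hσb⟩, ⟨hA, -⟩, ⟨hB, -⟩⟩ := mem_markings.mp hx
  have hpos := List.pairwise_sort_append_cons_sort (fun x hx => mem_Iio.mp (hA hx))
    (fun y hy => mem_Ioi.mp (hB hy))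
  have hword : (A.sort ++ b :: B.sort).map σ = A.sort.map σ ++ a :: B.sort.map σ := by
    simp [hσb]
  exact hword ▸ ⟨map_sublist_oneLine σ hpos, hpos.nodup.map σ.injective⟩

theorem nodup_reducedWord (hx : ⟨b, σ, A, B⟩ ∈ markings C a ℓ m) :
    (Marking.reducedWord ⟨b, σ, A, B⟩).Nodup ∧ a ∉ Marking.reducedWord ⟨b, σ, A, B⟩ := by
  have h := (sublist_oneLine_and_nodup_of_mem_markings hx).2
  rw [List.nodup_middle, List.nodup_cons, ← List.map_append] at h
  exact h.symm

theorem length_reducedWord (hx : ⟨b, σ, A, B⟩ ∈ markings C a ℓ m) :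
    (Marking.reducedWord ⟨b, σ, A, B⟩).length = ℓ + m := by
  obtain ⟨-, ⟨-, hA⟩, ⟨-, hB⟩⟩ := mem_markings.mp hx
  simp [Marking.reducedWord, hA, hB]

theorem injOn_reducedWord {d : ℕ} (hC : ∀ σ ∈ C, ∀ τ ∈ C, σ ≠ τ → d ≤ ulamDist σ τ)
    (hd : n - d ≤ ℓ + m) :
    Set.InjOn Marking.reducedWord (markings C a ℓ m : Set (Marking n)) := by
  rintro ⟨b, σ, A, B⟩ hx ⟨b', σ', A', B'⟩ hx' h
  obtain ⟨⟨hσC, hσb⟩, ⟨-, hAcard⟩, ⟨-, hBcard⟩⟩ := mem_markings.mp hx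
  obtain ⟨⟨hσC', hσb'⟩, ⟨-, hAcard'⟩, -⟩ := mem_markings.mp hx'
  obtain ⟨hA, hB⟩ : A.sort.map σ = A'.sort.map σ' ∧ B.sort.map σ = B'.sort.map σ' :=
    List.append_inj (by simpa [Marking.reducedWord] using h) (by simp [hAcard, hAcard'])
  obtain rfl : σ = σ' := by
    by_contra hne
    have hw' := (sublist_oneLine_and_nodup_of_mem_markings hx').1
    rw [← hA, ← hB] at hw'
    have := length_le_of_le_ulamDist (hC σ hσC σ' hσC' hne)
      (sublist_oneLine_and_nodup_of_mem_markings hx).1 hw'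
    simp only [List.length_append, List.length_cons, List.length_map, length_sort,
      hAcard, hBcard] at this
    omega
  obtain rfl : b = b' := σ.injective (hσb.trans hσb'.symm)
  obtain rfl : A = A' := by
    rw [← sort_toFinset A (· ≤ ·), ← sort_toFinset A' (· ≤ ·),
      List.map_injective_iff.mpr σ.injective hA]
  obtain rfl : B = B' := by
    rw [← sort_toFinset B (· ≤ ·), ← sort_toFinset B' (· ≤ ·),
      List.map_injective_iff.mpr σ.injective hB]
  rfl

end Markings

/-- Integer-programming constraint: for a code `C` of minimum Ulam distance `d`
and `X_{b,a} = |{σ ∈ C : σ(b) = a}|`, for every symbol `a` and every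
`0 ≤ ℓ ≤ n - d`,
`∑_b C(b-1,ℓ)·C(n-b, n-d-ℓ)·X_{b,a} ≤ (n-1)!/(d-1)!`
(positions indexed `0,…,n-1`, so `b-1` and `n-b` become `(b:ℕ)` and `n-1-(b:ℕ)`). -/
theorem integer_programming_constraint {n d : ℕ} (hd1 : 1 ≤ d) (hdn : d ≤ n)
    (C : Finset (Equiv.Perm (Fin n)))
    (hC : ∀ σ ∈ C, ∀ τ ∈ C, σ ≠ τ → d ≤ ulamDist σ τ)
    (a : Fin n) (ℓ : ℕ) (hℓ : ℓ ≤ n - d) :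
    ∑ b : Fin n, ((b : ℕ)).choose ℓ * (n - 1 - (b : ℕ)).choose (n - d - ℓ) *
        (C.filter (fun σ => σ b = a)).card ≤
      (n - 1).factorial / (d - 1).factorial := by
  have hwords : ∀ w ∈ (markings C a ℓ (n - d - ℓ)).image Marking.reducedWord,
      w.Nodup ∧ w.length = n - d ∧ ∀ y ∈ w, y ∈ univ.erase a := by
    simp only [mem_image]
    rintro _ ⟨⟨b, σ, A, B⟩, hx, rfl⟩
    obtain ⟨hnodup, ha⟩ := nodup_reducedWord hx
    exact ⟨hnodup, by rw [length_reducedWord hx]; omega,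
      fun y hy => mem_erase.mpr ⟨fun h => ha (h ▸ hy), mem_univ y⟩⟩
  calc _ = #(markings C a ℓ (n - d - ℓ)) := card_markings.symm
    _ = #((markings C a ℓ (n - d - ℓ)).image Marking.reducedWord) :=
        (card_image_of_injOn (injOn_reducedWord hC (by omega))).symm
    _ ≤ (#(univ.erase a)).descFactorial (n - d) := card_le_descFactorial_of_nodup hwords
    _ = (n - 1).factorial / (d - 1).factorial := by
        rw [card_erase_of_mem (mem_univ a), card_univ, Fintype.card_fin,
          Nat.descFactorial_eq_div (by omega), show n - 1 - (n - d) = d - 1 by omega]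
end
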